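/- arXiv:1810.05067 — 5 statements merged into one kernel-verified Lean document; each statement's English description precedes it below -/
import Mathlib

section
/- Let P be an N×N real matrix (N ≥ 1) that is row-stochastic (all entries nonnegative and every row sums to 1) and primitive, i.e., there exists m ≥ 1 such that every entry of P^m is strictly positive. Then there exists a probability vector π on {1,…,N} (π(j) ≥ 0 for all j and ∑_j π(j) = 1) with π^T P = π^T, and there exist constants b > 0 and γ ∈ (0,1) such that for all k ∈ ℕ and all indices i, j: |(P^k)_{ij} − π(j)| ≤ b·γ^k. In particular P^k converges to the rank-one matrix 1·π^T. -/
open Finset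

namespace Stmt0Aux

variable {N : ℕ}

lemma pow_entry_nonneg (P : Matrix (Fin N) (Fin N) ℝ)
    (hnonneg : ∀ i j, 0 ≤ P i j) : ∀ k i j, 0 ≤ (P ^ k) i j := by
  intro k
  induction k with
  | zero => intro i j; simp [Matrix.one_apply]; split <;> norm_num
  | succ k ih =>
    intro i j
    rw [pow_succ, Matrix.mul_apply]
    exact Finset.sum_nonneg fun l _ => mul_nonneg (ih i l) (hnonneg l j)

lemma pow_row_sum (P : Matrix (Fin N) (Fin N) ℝ)
    (hrow : ∀ i, ∑ j, P i j = 1) : ∀ k i, ∑ j, (P ^ k) i j = 1 := by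
  intro k
  induction k with
  | zero => intro i; simp [Matrix.one_apply]
  | succ k ih =>
    intro i
    rw [pow_succ]
    simp only [Matrix.mul_apply]
    rw [Finset.sum_comm]
    calc ∑ l, ∑ j, (P ^ k) i l * P l j = ∑ l, (P ^ k) i l * ∑ j, P l j := by
          simp [Finset.mul_sum]
      _ = 1 := by simp [hrow, ih i]

lemma max_sub_zero (p q : ℝ) : max (p - q) 0 = p - min p q := by
  rcases le_total p q with h | h
  · simp [min_eq_left h, max_eq_right (by linarith : p - q ≤ 0)]
  · simp [min_eq_right h, max_eq_left (by linarith : (0:ℝ) ≤ p - q)]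

/-- key contraction estimate -/
lemma contraction (he : (Finset.univ : Finset (Fin N)).Nonempty)
    (Q : Matrix (Fin N) (Fin N) ℝ)
    (hQr : ∀ i, ∑ j, Q i j = 1)
    (δ : ℝ) (hδ : ∀ i j, δ ≤ Q i j)
    (x : Fin N → ℝ) (i i' : Fin N) :
    (∑ l, Q i l * x l) - ∑ l, Q i' l * x l
      ≤ (1 - N * δ) * (univ.sup' he x - univ.inf' he x) := by
  set M := univ.sup' he x with hM
  set m := univ.inf' he x with hm
  have hosc : 0 ≤ M - m := by
    obtain ⟨l, _⟩ := id he
    have h1 := Finset.inf'_le x (Finset.mem_univ l)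
    have h2 := Finset.le_sup' x (Finset.mem_univ l)
    linarith
  have key : (∑ l, Q i l * x l) - ∑ l, Q i' l * x l
      = ∑ l, (Q i l - Q i' l) * (x l - m) := by
    have : ∑ l, (Q i l - Q i' l) * (x l - m)
        = (∑ l, Q i l * x l) - (∑ l, Q i' l * x l)
          - m * (∑ l, Q i l) + m * (∑ l, Q i' l) := by
      rw [Finset.mul_sum, Finset.mul_sum, ← Finset.sum_sub_distrib,
        ← Finset.sum_sub_distrib, ← Finset.sum_add_distrib]
      exact Finset.sum_congr rfl fun l _ => by ring
    rw [this, hQr, hQr]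
    ring
  rw [key]
  have step1 : ∑ l, (Q i l - Q i' l) * (x l - m)
      ≤ ∑ l, max (Q i l - Q i' l) 0 * (M - m) := by
    apply Finset.sum_le_sum
    intro l _
    have hx1 : m ≤ x l := Finset.inf'_le x (Finset.mem_univ l)
    have hx2 : x l ≤ M := Finset.le_sup' x (Finset.mem_univ l)
    calc (Q i l - Q i' l) * (x l - m) ≤ max (Q i l - Q i' l) 0 * (x l - m) :=
          mul_le_mul_of_nonneg_right (le_max_left _ _) (by linarith)
      _ ≤ max (Q i l - Q i' l) 0 * (M - m) :=
          mul_le_mul_of_nonneg_left (by linarith) (le_max_right _ _)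
  have step2 : ∑ l, max (Q i l - Q i' l) 0 * (M - m)
      = (1 - ∑ l, min (Q i l) (Q i' l)) * (M - m) := by
    rw [← Finset.sum_mul]
    congr 1
    have : ∀ l : Fin N, max (Q i l - Q i' l) 0 = Q i l - min (Q i l) (Q i' l) :=
      fun l => max_sub_zero _ _
    rw [Finset.sum_congr rfl fun l _ => this l, Finset.sum_sub_distrib, hQr]
  have step3 : (1 - ∑ l, min (Q i l) (Q i' l)) * (M - m) ≤ (1 - N * δ) * (M - m) := by
    apply mul_le_mul_of_nonneg_right _ hosc
    have : (N : ℝ) * δ ≤ ∑ l, min (Q i l) (Q i' l) := by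
      calc (N : ℝ) * δ = ∑ _l : Fin N, δ := by simp [mul_comm]
        _ ≤ ∑ l, min (Q i l) (Q i' l) :=
          Finset.sum_le_sum fun l _ => le_min (hδ i l) (hδ i' l)
    linarith
  linarith

variable {N : ℕ}

lemma sandwich (he : (Finset.univ : Finset (Fin N)).Nonempty)
    (P : Matrix (Fin N) (Fin N) ℝ)
    (hnonneg : ∀ i j, 0 ≤ P i j) (hrow : ∀ i, ∑ j, P i j = 1) :
    ∀ l k i j, univ.inf' he (fun i' => (P ^ k) i' j) ≤ (P ^ (l + k)) i j ∧
      (P ^ (l + k)) i j ≤ univ.sup' he (fun i' => (P ^ k) i' j) := by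
  intro l
  induction l with
  | zero =>
    intro k i j
    rw [zero_add]
    exact ⟨Finset.inf'_le _ (Finset.mem_univ i), Finset.le_sup' (fun i' => (P ^ k) i' j) (Finset.mem_univ i)⟩
  | succ l ih =>
    intro k i j
    have hq : P ^ (l + 1 + k) = P * P ^ (l + k) := by
      rw [← pow_succ']; ring_nf
    constructor
    · rw [hq, Matrix.mul_apply]
      calc univ.inf' he (fun i' => (P ^ k) i' j)
          = ∑ p, P i p * univ.inf' he (fun i' => (P ^ k) i' j) := by
            rw [← Finset.sum_mul, hrow, one_mul]
        _ ≤ ∑ p, P i p * (P ^ (l + k)) p j :=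
            Finset.sum_le_sum fun p _ =>
              mul_le_mul_of_nonneg_left ((ih k p j).1) (hnonneg i p)
    · rw [hq, Matrix.mul_apply]
      calc ∑ p, P i p * (P ^ (l + k)) p j
          ≤ ∑ p, P i p * univ.sup' he (fun i' => (P ^ k) i' j) :=
            Finset.sum_le_sum fun p _ =>
              mul_le_mul_of_nonneg_left ((ih k p j).2) (hnonneg i p)
        _ = univ.sup' he (fun i' => (P ^ k) i' j) := by
            rw [← Finset.sum_mul, hrow, one_mul]

end Stmt0Aux

open Stmt0Aux Finset

/-- A row-stochastic primitive matrix `P` has a stationary probability vector `π`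
and its powers converge geometrically to the rank-one matrix `1 πᵀ`:
`|(P^k)_{ij} − π j| ≤ b γ^k` for some `b > 0`, `γ ∈ (0,1)`; in particular
`(P^k)_{ij} → π j` for all `i, j`. -/
theorem stmt_0 (N : ℕ) (hN : 1 ≤ N) (P : Matrix (Fin N) (Fin N) ℝ)
    (hnonneg : ∀ i j, 0 ≤ P i j)
    (hrow : ∀ i, ∑ j, P i j = 1)
    (hprim : ∃ m : ℕ, 1 ≤ m ∧ ∀ i j, 0 < (P ^ m) i j) :
    ∃ π : Fin N → ℝ,
      (∀ j, 0 ≤ π j) ∧ (∑ j, π j = 1) ∧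
      (∀ j, ∑ i, π i * P i j = π j) ∧
      (∃ b : ℝ, 0 < b ∧ ∃ γ : ℝ, γ ∈ Set.Ioo (0 : ℝ) 1 ∧
        ∀ (k : ℕ) (i j : Fin N), |(P ^ k) i j - π j| ≤ b * γ ^ k) ∧
      (∀ i j : Fin N,
        Filter.Tendsto (fun k : ℕ => (P ^ k) i j) Filter.atTop (nhds (π j))) := by
  classical
  obtain ⟨m, hm1, hmpos⟩ := hprim
  have i0 : Fin N := ⟨0, hN⟩
  have he : (Finset.univ : Finset (Fin N)).Nonempty := ⟨i0, Finset.mem_univ i0⟩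
  set Mf : ℕ → Fin N → ℝ := fun k j => univ.sup' he (fun i => (P ^ k) i j) with hMf
  set mf : ℕ → Fin N → ℝ := fun k j => univ.inf' he (fun i => (P ^ k) i j) with hmf
  have hmem : ∀ k i j, mf k j ≤ (P ^ k) i j ∧ (P ^ k) i j ≤ Mf k j := fun k i j =>
    ⟨Finset.inf'_le _ (Finset.mem_univ i),
     Finset.le_sup' (fun i' => (P ^ k) i' j) (Finset.mem_univ i)⟩
  have hmono : ∀ l k j, mf k j ≤ mf (l + k) j ∧ Mf (l + k) j ≤ Mf k j := by
    intro l k j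
    constructor
    · exact Finset.le_inf' he _ fun i _ => (sandwich he P hnonneg hrow l k i j).1
    · exact Finset.sup'_le he _ fun i _ => (sandwich he P hnonneg hrow l k i j).2
  have hml : ∀ l k j, mf l j ≤ Mf k j := by
    intro l k j
    rcases le_total l k with h | h
    · have := (hmono (k - l) l j).1
      rw [Nat.sub_add_cancel h] at this
      exact le_trans this ((hmem k i0 j).1.trans (hmem k i0 j).2)
    · have := (hmono (l - k) k j).2
      rw [Nat.sub_add_cancel h] at this
      exact le_trans ((hmem l i0 j).1.trans (hmem l i0 j).2) this
  set D : ℕ → Fin N → ℝ := fun k j => Mf k j - mf k j with hD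
  have hD0 : ∀ k j, 0 ≤ D k j := fun k j => by
    have := (hmem k i0 j).1.trans (hmem k i0 j).2
    simp only [hD]; linarith
  have hDmono : ∀ l k j, D (l + k) j ≤ D k j := fun l k j => by
    have h1 := (hmono l k j).1
    have h2 := (hmono l k j).2
    simp only [hD]; linarith
  -- δ and c
  set δ : ℝ := univ.inf' he (fun i => univ.inf' he (fun j => (P ^ m) i j)) with hδdef
  have hδle : ∀ i j, δ ≤ (P ^ m) i j := fun i j =>
    le_trans (Finset.inf'_le _ (Finset.mem_univ i)) (Finset.inf'_le _ (Finset.mem_univ j))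
  have hδpos : 0 < δ := by
    rw [hδdef, Finset.lt_inf'_iff]
    intro i _
    rw [Finset.lt_inf'_iff]
    intro j _
    exact hmpos i j
  set c : ℝ := 1 - N * δ with hcdef
  have hc0 : 0 ≤ c := by
    have : (N : ℝ) * δ ≤ 1 := by
      calc (N : ℝ) * δ = ∑ _j : Fin N, δ := by simp [mul_comm]
        _ ≤ ∑ j, (P ^ m) i0 j := Finset.sum_le_sum fun j _ => hδle i0 j
        _ = 1 := pow_row_sum P hrow m i0
    simp only [hcdef]; linarith
  have hc1 : c < 1 := by
    have hN' : (0 : ℝ) < N := by exact_mod_cast hN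
    have : 0 < (N : ℝ) * δ := mul_pos hN' hδpos
    simp only [hcdef]; linarith
  -- contraction
  have hcontr : ∀ k j, D (m + k) j ≤ c * D k j := by
    intro k j
    obtain ⟨ia, _, hia⟩ := Finset.exists_mem_eq_sup' he (fun i => (P ^ (m + k)) i j)
    obtain ⟨ib, _, hib⟩ := Finset.exists_mem_eq_inf' he (fun i => (P ^ (m + k)) i j)
    have hpa : ∀ i', (P ^ (m + k)) i' j = ∑ l, (P ^ m) i' l * (P ^ k) l j := by
      intro i'
      rw [pow_add, Matrix.mul_apply]
    have := contraction he (P ^ m) (pow_row_sum P hrow m) δ hδle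
      (fun l => (P ^ k) l j) ia ib
    simp only [hD, hMf, hmf]
    rw [hia, hib, hpa ia, hpa ib]
    exact this
  -- geometric decay of D along multiples of m
  have hD0le1 : ∀ j, D 0 j ≤ 1 := by
    intro j
    have h1 : Mf 0 j ≤ 1 := by
      apply Finset.sup'_le
      intro i _
      simp only [pow_zero, Matrix.one_apply]
      split <;> norm_num
    have h2 : 0 ≤ mf 0 j := by
      apply Finset.le_inf'
      intro i _
      exact pow_entry_nonneg P hnonneg 0 i j
    simp only [hD]; linarith
  have hDq : ∀ q j, D (m * q) j ≤ c ^ q := by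
    intro q j
    induction q with
    | zero => simpa using hD0le1 j
    | succ q ih =>
      have : m * (q + 1) = m + m * q := by ring
      rw [this, pow_succ]
      calc D (m + m * q) j ≤ c * D (m * q) j := hcontr (m * q) j
        _ ≤ c * c ^ q := mul_le_mul_of_nonneg_left ih hc0
        _ = c ^ q * c := by ring
  -- γ
  set c' : ℝ := max c (1 / 2) with hc'def
  have hc'pos : 0 < c' := lt_of_lt_of_le (by norm_num) (le_max_right _ _)
  have hc'lt1 : c' < 1 := max_lt hc1 (by norm_num)
  have hcc' : c ≤ c' := le_max_left _ _
  have hm0 : (m : ℝ) ≠ 0 := by positivity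
  set γ : ℝ := c' ^ ((m : ℝ)⁻¹) with hγdef
  have hγpos : 0 < γ := Real.rpow_pos_of_pos hc'pos _
  have hγlt1 : γ < 1 := Real.rpow_lt_one hc'pos.le hc'lt1 (by positivity)
  have hγm : γ ^ m = c' := by
    rw [hγdef, ← Real.rpow_natCast (c' ^ ((m : ℝ)⁻¹)) m, ← Real.rpow_mul hc'pos.le,
      inv_mul_cancel₀ hm0, Real.rpow_one]
  -- main bound on D
  have hDbound : ∀ k j, D k j ≤ c'⁻¹ * γ ^ k := by
    intro k j
    have hk : k % m + m * (k / m) = k := Nat.mod_add_div k m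
    have h1 : D k j ≤ D (m * (k / m)) j := by
      have := hDmono (k % m) (m * (k / m)) j
      rw [hk] at this
      exact this
    have h2 : D (m * (k / m)) j ≤ c' ^ (k / m) :=
      le_trans (hDq (k / m) j) (pow_le_pow_left₀ hc0 hcc' _)
    have h3 : c' ^ (k / m) = γ ^ (m * (k / m)) := by
      rw [← hγm, ← pow_mul]
    have h4 : γ ^ (m * (k / m) + m) ≤ γ ^ k := by
      apply pow_le_pow_of_le_one hγpos.le hγlt1.le
      have : k % m < m := Nat.mod_lt _ hm1
      omega
    have h5 : γ ^ (m * (k / m)) = γ ^ (m * (k / m) + m) * c'⁻¹ := by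
      rw [pow_add, hγm, mul_assoc, mul_inv_cancel₀ (ne_of_gt hc'pos), mul_one]
    calc D k j ≤ c' ^ (k / m) := le_trans h1 h2
      _ = γ ^ (m * (k / m) + m) * c'⁻¹ := by rw [h3, h5]
      _ ≤ γ ^ k * c'⁻¹ := mul_le_mul_of_nonneg_right h4 (by positivity)
      _ = c'⁻¹ * γ ^ k := by ring
  -- define π
  have hbdd : ∀ j, BddAbove (Set.range fun k => mf k j) := by
    intro j
    exact ⟨Mf 0 j, by rintro x ⟨k, rfl⟩; exact hml k 0 j⟩
  set π : Fin N → ℝ := fun j => ⨆ k, mf k j with hπdef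
  have hπ1 : ∀ k j, mf k j ≤ π j := fun k j => le_ciSup (hbdd j) k
  have hπ2 : ∀ k j, π j ≤ Mf k j := fun k j => ciSup_le fun l => hml l k j
  have habs : ∀ k i j, |(P ^ k) i j - π j| ≤ D k j := by
    intro k i j
    have h1 := (hmem k i j).1
    have h2 := (hmem k i j).2
    have h3 := hπ1 k j
    have h4 := hπ2 k j
    rw [abs_le]
    constructor <;> simp only [hD] <;> linarith
  have hfinal : ∀ k i j, |(P ^ k) i j - π j| ≤ c'⁻¹ * γ ^ k := fun k i j =>
    le_trans (habs k i j) (hDbound k j)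
  -- tendsto
  have hgeo : Filter.Tendsto (fun k : ℕ => c'⁻¹ * γ ^ k) Filter.atTop (nhds 0) := by
    have := (tendsto_pow_atTop_nhds_zero_of_lt_one hγpos.le hγlt1).const_mul c'⁻¹
    simpa using this
  have htend : ∀ i j, Filter.Tendsto (fun k : ℕ => (P ^ k) i j) Filter.atTop (nhds (π j)) := by
    intro i j
    rw [tendsto_iff_norm_sub_tendsto_zero]
    apply squeeze_zero (fun k => norm_nonneg _) _ hgeo
    intro k
    rw [Real.norm_eq_abs]
    exact hfinal k i j
  refine ⟨π, ?_, ?_, ?_, ⟨c'⁻¹, by positivity, γ, ⟨hγpos, hγlt1⟩, hfinal⟩, htend⟩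
  · intro j
    have : 0 ≤ mf 0 j := Finset.le_inf' he _ fun i _ => pow_entry_nonneg P hnonneg 0 i j
    exact le_trans this (hπ1 0 j)
  · have h1 : Filter.Tendsto (fun k : ℕ => ∑ j, (P ^ k) i0 j) Filter.atTop
        (nhds (∑ j, π j)) := tendsto_finset_sum _ fun j _ => htend i0 j
    have h2 : (fun k : ℕ => ∑ j, (P ^ k) i0 j) = fun _ => (1 : ℝ) :=
      funext fun k => pow_row_sum P hrow k i0
    rw [h2] at h1
    exact tendsto_nhds_unique h1 tendsto_const_nhds
  · intro j
    have hA : Filter.Tendsto (fun k : ℕ => ∑ i, (P ^ k) i0 i * P i j) Filter.atTop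
        (nhds (∑ i, π i * P i j)) :=
      tendsto_finset_sum _ fun i _ => (htend i0 i).mul_const _
    have hB : (fun k : ℕ => ∑ i, (P ^ k) i0 i * P i j)
        = fun k : ℕ => (P ^ (k + 1)) i0 j := by
      funext k
      rw [pow_succ, Matrix.mul_apply]
    rw [hB] at hA
    have hC : Filter.Tendsto (fun k : ℕ => (P ^ (k + 1)) i0 j) Filter.atTop (nhds (π j)) :=
      (htend i0 j).comp (Filter.tendsto_add_atTop_nat 1)
    exact tendsto_nhds_unique hA hC
end

section
/- Let N, m ∈ ℕ, ρ > 0, let I₊ and I₋ be real N×m matrices, and let f : ℝ^N → ℝ be differentiable with gradient ∇f. Suppose the vectors x̂, x* ∈ ℝ^N and ẑ, z, z*, β̂, β, β* ∈ ℝ^m satisfy: (i) ∇f(x̂) + I₋ β̂ = ρ·I₊(z − ẑ); (ii) (ρ/2)·I₋ᵀ(x̂ − x*) = β̂ − β; (iii) (1/2)·I₊ᵀ(x̂ − x*) = ẑ − z*; (iv) ∇f(x*) + I₋ β* = 0; (v) I₋ᵀ x* = 0. Then ⟨∇f(x̂) − ∇f(x*), x̂ − x*⟩ = 2ρ·⟨z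 − ẑ, ẑ − z*⟩ + (2/ρ)·⟨β − β̂, β̂ − β*⟩. -/
open scoped RealInnerProductSpace Matrix

/-
Proof idea: subtracting the KKT condition (iv) from the optimality condition (i) writes
∇f(x̂) − ∇f(x*) as ρ I₊(z − ẑ) − I₋(β̂ − β*). Pairing with x̂ − x* and moving the matrices to the
other side of the inner product, (ii) and (iii) turn I₊ᵀ(x̂ − x*) and I₋ᵀ(x̂ − x*) into
2(ẑ − z*) and (2/ρ)(β̂ − β).
-/

theorem Matrix.inner_toEuclideanLin_left {m n : Type*} [Fintype m] [DecidableEq m] [Fintype n]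
    [DecidableEq n] (A : Matrix m n ℝ) (v : EuclideanSpace ℝ n) (w : EuclideanSpace ℝ m) :
    ⟪A.toEuclideanLin v, w⟫ = ⟪v, Aᵀ.toEuclideanLin w⟫ := by
  rw [← Matrix.conjTranspose_eq_transpose_of_trivial,
    Matrix.toEuclideanLin_conjTranspose_eq_adjoint, LinearMap.adjoint_inner_right]

theorem stmt_7_general (N m : ℕ) (ρ : ℝ) (hρ : 0 < ρ)
    (Iplus Iminus : Matrix (Fin N) (Fin m) ℝ)
    (gradf : EuclideanSpace ℝ (Fin N) → EuclideanSpace ℝ (Fin N))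
    (xhat xstar : EuclideanSpace ℝ (Fin N))
    (zhat z zstar βhat β βstar : EuclideanSpace ℝ (Fin m))
    (h1 : gradf xhat + Iminus.toEuclideanLin βhat = ρ • Iplus.toEuclideanLin (z - zhat))
    (h2 : (ρ / 2) • Iminus.transpose.toEuclideanLin (xhat - xstar) = βhat - β)
    (h3 : (1 / 2 : ℝ) • Iplus.transpose.toEuclideanLin (xhat - xstar) = zhat - zstar)
    (h4 : gradf xstar + Iminus.toEuclideanLin βstar = 0) :
    ⟪gradf xhat - gradf xstar, xhat - xstar⟫
      = 2 * ρ * ⟪z - zhat, zhat - zstar⟫ + (2 / ρ) * ⟪β - βhat, βhat - βstar⟫ := by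
  have hgrad_sub : gradf xhat - gradf xstar
      = ρ • Iplus.toEuclideanLin (z - zhat) - Iminus.toEuclideanLin (βhat - βstar) := by
    rw [eq_sub_of_add_eq h1, eq_neg_of_add_eq_zero_left h4, map_sub (Iminus.toEuclideanLin)]
    abel
  have hplus : Iplusᵀ.toEuclideanLin (xhat - xstar) = (2 : ℝ) • (zhat - zstar) := by
    rw [← h3, smul_smul]
    norm_num
  have hminus : Iminusᵀ.toEuclideanLin (xhat - xstar) = (2 / ρ) • (βhat - β) := by
    rw [← h2, smul_smul, div_mul_div_comm, mul_comm 2 ρ, div_self (by positivity), one_smul]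
  rw [hgrad_sub, inner_sub_left, real_inner_smul_left, Matrix.inner_toEuclideanLin_left,
    Matrix.inner_toEuclideanLin_left, hplus, hminus, real_inner_smul_right,
    real_inner_smul_right, ← neg_sub βhat β, inner_neg_left, real_inner_comm (βhat - βstar)]
  ring

/-- Key inner-product identity: subtracting the KKT conditions from the ADMM
optimality conditions yields
`⟨∇f(x̂) − ∇f(x*), x̂ − x*⟩ = 2ρ⟨z − ẑ, ẑ − z*⟩ + (2/ρ)⟨β − β̂, β̂ − β*⟩`. -/
theorem stmt_7 (N m : ℕ) (ρ : ℝ) (hρ : 0 < ρ)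
    (Iplus Iminus : Matrix (Fin N) (Fin m) ℝ)
    (f : EuclideanSpace ℝ (Fin N) → ℝ)
    (gradf : EuclideanSpace ℝ (Fin N) → EuclideanSpace ℝ (Fin N))
    (hgrad : ∀ u, HasGradientAt f (gradf u) u)
    (xhat xstar : EuclideanSpace ℝ (Fin N))
    (zhat z zstar βhat β βstar : EuclideanSpace ℝ (Fin m))
    (h1 : gradf xhat + Iminus.toEuclideanLin βhat = ρ • Iplus.toEuclideanLin (z - zhat))
    (h2 : (ρ / 2) • Iminus.transpose.toEuclideanLin (xhat - xstar) = βhat - β)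
    (h3 : (1 / 2 : ℝ) • Iplus.transpose.toEuclideanLin (xhat - xstar) = zhat - zstar)
    (h4 : gradf xstar + Iminus.toEuclideanLin βstar = 0)
    (h5 : Iminus.transpose.toEuclideanLin xstar = 0) :
    ⟪gradf xhat - gradf xstar, xhat - xstar⟫
      = 2 * ρ * ⟪z - zhat, zhat - zstar⟫ + (2 / ρ) * ⟪β - βhat, βhat - βstar⟫ :=
  stmt_7_general N m ρ hρ Iplus Iminus gradf xhat xstar zhat z zstar βhat β βstar h1 h2 h3 h4
end

section
/- Let N, m ∈ ℕ, ρ > 0, ν > 0, let I₊ and I₋ be real N×m matrices, and let f : ℝ^N → ℝ be differentiable with gradient ∇f satisfying the strong monotonicity condition ⟨∇f(u) − ∇f(v), u − v⟩ ≥ ν‖u − v‖² for all u, v ∈ ℝ^N. Suppose x̂, x* ∈ ℝ^N and ẑ, z, z*, β̂, β, β* ∈ ℝ^m satisfy: (i) ∇f(x̂) + I₋ β̂ = ρ·I₊(z − ẑ); (ii) (ρ/2)·I₋ᵀ(x̂ − x*) = β̂ − β; (iii) (1/2)·I₊ᵀ(x̂ − x*) = ẑ − z*; (iv) ∇f(x*)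 + I₋ β* = 0; (v) I₋ᵀ x* = 0. Define for pairs w = (z, β) the G-norm ‖w‖²_G := ρ‖z‖² + (1/ρ)‖β‖², and write w = (z, β), ŵ = (ẑ, β̂), w* = (z*, β*). Then ν‖x̂ − x*‖² ≤ ‖w − w*‖²_G − ‖ŵ − w*‖²_G − ‖w − ŵ‖²_G. -/
open scoped RealInnerProductSpace

lemma aux_transpose_inner {a b : ℕ} (M : Matrix (Fin a) (Fin b) ℝ)
    (v : EuclideanSpace ℝ (Fin b)) (u : EuclideanSpace ℝ (Fin a)) :
    ⟪M.toEuclideanLin v, u⟫ = ⟪v, M.transpose.toEuclideanLin u⟫ := by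
  have h : M.transpose = M.conjTranspose := by
    ext i j; simp [Matrix.conjTranspose_apply]
  rw [h, Matrix.toEuclideanLin_conjTranspose_eq_adjoint]
  exact (LinearMap.adjoint_inner_right _ _ _).symm

lemma aux_norm_id {n : ℕ} (a b : EuclideanSpace ℝ (Fin n)) :
    ‖a‖ ^ 2 - ‖b‖ ^ 2 - ‖a - b‖ ^ 2 = 2 * ⟪b, a - b⟫ := by
  have h := norm_add_sq_real b (a - b)
  have h2 : b + (a - b) = a := by abel
  rw [h2] at h
  linarith

/-- Under strong monotonicity of `∇f`, the ADMM optimality and KKT conditions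
imply `ν‖x̂ − x*‖² ≤ ‖w − w*‖²_G − ‖ŵ − w*‖²_G − ‖w − ŵ‖²_G`, where
`‖(z, β)‖²_G = ρ‖z‖² + (1/ρ)‖β‖²`. -/
theorem stmt_8 (N m : ℕ) (ρ ν : ℝ) (hρ : 0 < ρ) (hν : 0 < ν)
    (Iplus Iminus : Matrix (Fin N) (Fin m) ℝ)
    (f : EuclideanSpace ℝ (Fin N) → ℝ)
    (gradf : EuclideanSpace ℝ (Fin N) → EuclideanSpace ℝ (Fin N))
    (hgrad : ∀ u, HasGradientAt f (gradf u) u)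
    (hmono : ∀ u v : EuclideanSpace ℝ (Fin N),
      ν * ‖u - v‖ ^ 2 ≤ ⟪gradf u - gradf v, u - v⟫)
    (xhat xstar : EuclideanSpace ℝ (Fin N))
    (zhat z zstar βhat β βstar : EuclideanSpace ℝ (Fin m))
    (h1 : gradf xhat + Iminus.toEuclideanLin βhat = ρ • Iplus.toEuclideanLin (z - zhat))
    (h2 : (ρ / 2) • Iminus.transpose.toEuclideanLin (xhat - xstar) = βhat - β)
    (h3 : (1 / 2 : ℝ) • Iplus.transpose.toEuclideanLin (xhat - xstar) = zhat - zstar)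
    (h4 : gradf xstar + Iminus.toEuclideanLin βstar = 0)
    (h5 : Iminus.transpose.toEuclideanLin xstar = 0) :
    ν * ‖xhat - xstar‖ ^ 2
      ≤ (ρ * ‖z - zstar‖ ^ 2 + (1 / ρ) * ‖β - βstar‖ ^ 2)
        - (ρ * ‖zhat - zstar‖ ^ 2 + (1 / ρ) * ‖βhat - βstar‖ ^ 2)
        - (ρ * ‖z - zhat‖ ^ 2 + (1 / ρ) * ‖β - βhat‖ ^ 2) := by
  set dx := xhat - xstar with hdx
  have hρ' : (ρ : ℝ) ≠ 0 := ne_of_gt hρ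
  -- key difference equation
  have hkey : gradf xhat - gradf xstar
      = ρ • Iplus.toEuclideanLin (z - zhat) - Iminus.toEuclideanLin (βhat - βstar) := by
    have h := congrArg₂ (· - ·) h1 h4
    simp only [sub_zero] at h
    rw [eq_sub_iff_add_eq]
    calc gradf xhat - gradf xstar + Iminus.toEuclideanLin (βhat - βstar)
        = (gradf xhat + Iminus.toEuclideanLin βhat)
          - (gradf xstar + Iminus.toEuclideanLin βstar) := by rw [map_sub]; abel
      _ = ρ • Iplus.toEuclideanLin (z - zhat) := h
  -- transpose facts
  have hIp : Iplus.transpose.toEuclideanLin dx = (2 : ℝ) • (zhat - zstar) := by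
    rw [← h3]; module
  have hIm : Iminus.transpose.toEuclideanLin dx = (2 / ρ) • (βhat - β) := by
    rw [← h2]
    rw [smul_smul]
    rw [show (2 / ρ) * (ρ / 2) = 1 by field_simp]
    rw [one_smul]
  have hinner : ⟪gradf xhat - gradf xstar, dx⟫
      = 2 * ρ * ⟪zhat - zstar, z - zhat⟫ + (2 / ρ) * ⟪βhat - βstar, β - βhat⟫ := by
    rw [hkey, inner_sub_left, real_inner_smul_left]
    rw [aux_transpose_inner Iplus (z - zhat) dx, aux_transpose_inner Iminus (βhat - βstar) dx]
    rw [hIp, hIm, real_inner_smul_right, real_inner_smul_right]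
    rw [real_inner_comm (z - zhat) (zhat - zstar)]
    have : ⟪βhat - βstar, βhat - β⟫ = - ⟪βhat - βstar, β - βhat⟫ := by
      rw [← inner_neg_right]; congr 1; abel
    rw [this]
    ring
  have hRHS : (ρ * ‖z - zstar‖ ^ 2 + (1 / ρ) * ‖β - βstar‖ ^ 2)
        - (ρ * ‖zhat - zstar‖ ^ 2 + (1 / ρ) * ‖βhat - βstar‖ ^ 2)
        - (ρ * ‖z - zhat‖ ^ 2 + (1 / ρ) * ‖β - βhat‖ ^ 2)
      = 2 * ρ * ⟪zhat - zstar, z - zhat⟫ + (2 / ρ) * ⟪βhat - βstar, β - βhat⟫ := by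
    have hz := aux_norm_id (z - zstar) (zhat - zstar)
    have hb := aux_norm_id (β - βstar) (βhat - βstar)
    have e1 : z - zstar - (zhat - zstar) = z - zhat := by abel
    have e2 : β - βstar - (βhat - βstar) = β - βhat := by abel
    rw [e1] at hz; rw [e2] at hb
    linear_combination ρ * hz + (1 / ρ) * hb
  rw [hRHS, ← hinner]
  exact hmono xhat xstar
end

section
/- Let N, m ∈ ℕ, ρ > 0, L > 0, σ₋ > 0, σ₊ ≥ 0 and κ > 1. Let I₊ and I₋ be real N×m matrices with ‖I₊ u‖ ≤ σ₊‖u‖ for all u ∈ ℝ^m. Let f : ℝ^N → ℝ be differentiable with ‖∇f(u) − ∇f(v)‖ ≤ L‖u − v‖ for all u, v. Suppose x̂, x* ∈ ℝ^N, ẑ, z ∈ ℝ^m, β̂, β* ∈ ℝ^m satisfy ∇f(x̂) − ∇f(x*) = ρ·I₊(z − ẑ) − I₋(β̂ − β*) and ‖I₋(β̂ − β*)‖ ≥ σ₋‖β̂ − β*‖. Then (1/ρ)‖β̂ − β*‖² ≤ (κL²/(ρσ₋²))·‖x̂ − x*‖² + (ρκσ₊²/((κ−1)σ₋²))·‖z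 − ẑ‖². -/
open scoped RealInnerProductSpace

/-- Dual-variable bound: if `∇f(x̂) − ∇f(x*) = ρ I₊(z − ẑ) − I₋(β̂ − β*)` with
`∇f` `L`-Lipschitz, `‖I₊u‖ ≤ σ₊‖u‖` and `‖I₋(β̂ − β*)‖ ≥ σ₋‖β̂ − β*‖`, then
`(1/ρ)‖β̂ − β*‖² ≤ (κL²/(ρσ₋²))‖x̂ − x*‖² + (ρκσ₊²/((κ−1)σ₋²))‖z − ẑ‖²`. -/
theorem stmt_9 (N m : ℕ) (ρ L σm σp κ : ℝ)
    (hρ : 0 < ρ) (hL : 0 < L) (hσm : 0 < σm) (hσp : 0 ≤ σp) (hκ : 1 < κ)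
    (Iplus Iminus : Matrix (Fin N) (Fin m) ℝ)
    (hIp : ∀ u : EuclideanSpace ℝ (Fin m), ‖Iplus.toEuclideanLin u‖ ≤ σp * ‖u‖)
    (f : EuclideanSpace ℝ (Fin N) → ℝ)
    (gradf : EuclideanSpace ℝ (Fin N) → EuclideanSpace ℝ (Fin N))
    (hgrad : ∀ u, HasGradientAt f (gradf u) u)
    (hlip : ∀ u v : EuclideanSpace ℝ (Fin N), ‖gradf u - gradf v‖ ≤ L * ‖u - v‖)
    (xhat xstar : EuclideanSpace ℝ (Fin N))
    (zhat z βhat βstar : EuclideanSpace ℝ (Fin m))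
    (heq : gradf xhat - gradf xstar
      = ρ • Iplus.toEuclideanLin (z - zhat) - Iminus.toEuclideanLin (βhat - βstar))
    (hIm : σm * ‖βhat - βstar‖ ≤ ‖Iminus.toEuclideanLin (βhat - βstar)‖) :
    (1 / ρ) * ‖βhat - βstar‖ ^ 2
      ≤ (κ * L ^ 2 / (ρ * σm ^ 2)) * ‖xhat - xstar‖ ^ 2
        + (ρ * κ * σp ^ 2 / ((κ - 1) * σm ^ 2)) * ‖z - zhat‖ ^ 2 := by
  have ha : Iminus.toEuclideanLin (βhat - βstar)
      = ρ • Iplus.toEuclideanLin (z - zhat) - (gradf xhat - gradf xstar) := by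
    rw [heq]; abel
  have hna : ‖Iminus.toEuclideanLin (βhat - βstar)‖
      ≤ ρ * (σp * ‖z - zhat‖) + L * ‖xhat - xstar‖ := by
    rw [ha]
    refine (norm_sub_le _ _).trans ?_
    gcongr
    · rw [norm_smul, Real.norm_of_nonneg hρ.le]
      exact mul_le_mul_of_nonneg_left (hIp _) hρ.le
    · exact hlip _ _
  set B := ‖βhat - βstar‖
  set X := ‖xhat - xstar‖
  set Z := ‖z - zhat‖
  have hB : 0 ≤ B := norm_nonneg _
  have hX : 0 ≤ X := norm_nonneg _
  have hZ : 0 ≤ Z := norm_nonneg _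
  have key : σm * B ≤ ρ * (σp * Z) + L * X := le_trans hIm hna
  have hκ1 : 0 < κ - 1 := by linarith
  have hsq : (κ - 1) * ((σm * B) ^ 2)
      ≤ κ * (κ - 1) * (L * X) ^ 2 + κ * (ρ * σp * Z) ^ 2 := by
    have h1 : (σm * B) ^ 2 ≤ (L * X + ρ * (σp * Z)) ^ 2 := by
      have := mul_self_le_mul_self (by positivity) key
      nlinarith
    nlinarith [sq_nonneg ((κ - 1) * (L * X) - ρ * (σp * Z)), sq_nonneg (L * X),
      sq_nonneg (ρ * (σp * Z))]
  rw [← sub_nonneg]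
  have expand : (κ * L ^ 2 / (ρ * σm ^ 2)) * X ^ 2
        + (ρ * κ * σp ^ 2 / ((κ - 1) * σm ^ 2)) * Z ^ 2 - (1 / ρ) * B ^ 2
      = (κ * (κ - 1) * (L * X) ^ 2 + κ * (ρ * σp * Z) ^ 2 - (κ - 1) * ((σm * B) ^ 2))
        / (ρ * ((κ - 1) * σm ^ 2)) := by
    field_simp
  rw [expand]
  apply div_nonneg (by linarith) (by positivity)
end

section
/- Let N, m ∈ ℕ, ρ > 0, ν > 0, L > 0, σ₋ > 0, σ₊ > 0 and κ > 1. Let I₊ and I₋ be real N×m matrices with ‖I₊ u‖ ≤ σ₊‖u‖ for all u ∈ ℝ^m and ‖I₊ᵀ v‖ ≤ σ₊‖v‖ for all v ∈ ℝ^N. Let f : ℝ^N → ℝ be differentiable with ⟨∇f(u) − ∇f(v), u − v⟩ ≥ ν‖u − v‖² and ‖∇f(u) − ∇f(v)‖ ≤ L‖u − v‖ for all u, v. Suppose x̂, x* ∈ ℝ^N and ẑ, z, z*, β̂, β, β* ∈ ℝ^m satisfy: (i) ∇f(x̂) + I₋ β̂ = ρ·I₊(z − ẑ); (ii) (ρ/2)·I₋ᵀ(x̂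 − x*) = β̂ − β; (iii) (1/2)·I₊ᵀ(x̂ − x*) = ẑ − z*; (iv) ∇f(x*) + I₋ β* = 0; (v) I₋ᵀ x* = 0; (vi) ‖I₋(β̂ − β*)‖ ≥ σ₋‖β̂ − β*‖. Define c := min{ (κ−1)σ₋²/(κσ₊²), ν/( κL²/(ρσ₋²) + (ρ/4)σ₊² ) } and for pairs w = (z, β) the G-norm ‖w‖²_G := ρ‖z‖² + (1/ρ)‖β‖². Then, writing ŵ = (ẑ, β̂), w = (z, β), w* = (z*, β*): ‖ŵ − w*‖²_G ≤ (1/(1+c))·‖w − w*‖²_G. -/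
/-!
Pairing the difference of the optimality conditions (i) and (iv) with `x̂ − x*`, and rewriting
the two adjoint terms by (ii), (iii) and the three-point identity
`2⟪a − b, b − c⟫ = ‖a − c‖² − ‖b − c‖² − ‖a − b‖²`, gives the energy identity
`⟪∇f(x̂) − ∇f(x*), x̂ − x*⟫ + ‖ŵ − w*‖²_G + ‖w − ŵ‖²_G = ‖w − w*‖²_G`; by strong monotonicity
the G-norm therefore drops by at least `ν‖x̂ − x*‖² + ρ‖z − ẑ‖²`. In the other direction (iii)
gives `‖ẑ − z*‖ ≤ (σ₊/2)‖x̂ − x*‖`, and (vi) with (i) − (iv) gives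
`σ₋‖β̂ − β*‖ ≤ L‖x̂ − x*‖ + ρσ₊‖z − ẑ‖`. Squaring the latter with Young's inequality, weights
`κ` and `κ/(κ−1)`, bounds `c‖ŵ − w*‖²_G` by that drop; both terms of the minimum defining `c`
are exactly what this comparison needs.
-/

open scoped RealInnerProductSpace

theorem Matrix.toEuclideanLin_transpose_eq_adjoint {m n : Type*} [Fintype m] [Fintype n]
    [DecidableEq m] [DecidableEq n] (A : Matrix m n ℝ) :
    A.transpose.toEuclideanLin = LinearMap.adjoint A.toEuclideanLin := by
  rw [← Matrix.conjTranspose_eq_transpose_of_trivial,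
    Matrix.toEuclideanLin_conjTranspose_eq_adjoint]

section InnerProductSpace

variable {E F : Type*} [NormedAddCommGroup E] [InnerProductSpace ℝ E]
  [NormedAddCommGroup F] [InnerProductSpace ℝ F]

theorem two_mul_real_inner_sub_sub (a b c : E) :
    2 * ⟪a - b, b - c⟫ = ‖a - c‖ ^ 2 - ‖b - c‖ ^ 2 - ‖a - b‖ ^ 2 := by
  rw [show a - c = (a - b) + (b - c) by abel, norm_add_sq_real]
  ring

variable [FiniteDimensional ℝ E] [FiniteDimensional ℝ F]

open LinearMap (adjoint adjoint_inner_right)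

/-- The energy identity of one ADMM step: `d` plays the role of `∇f(x̂) − ∇f(x*)` and `x` of
`x̂ − x*`; the two pairs of squared norms on the left are `‖ŵ − w*‖²_G` and `‖w − ŵ‖²_G`. -/
theorem admm_energy_identity {ρ : ℝ} (hρ : ρ ≠ 0) (Ip Im : F →ₗ[ℝ] E) {d x : E}
    {zhat z zstar βhat β βstar : F}
    (hopt : d + Im (βhat - βstar) = ρ • Ip (z - zhat))
    (hβ : (ρ / 2) • adjoint Im x = βhat - β)
    (hz : (1 / 2 : ℝ) • adjoint Ip x = zhat - zstar) :
    ⟪d, x⟫ + (ρ * ‖zhat - zstar‖ ^ 2 + (1 / ρ) * ‖βhat - βstar‖ ^ 2)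
        + (ρ * ‖z - zhat‖ ^ 2 + (1 / ρ) * ‖β - βhat‖ ^ 2)
      = ρ * ‖z - zstar‖ ^ 2 + (1 / ρ) * ‖β - βstar‖ ^ 2 := by
  have hIm : adjoint Im x = (2 / ρ) • (βhat - β) := by
    rw [← hβ, smul_smul, show 2 / ρ * (ρ / 2) = 1 by field_simp, one_smul]
  have hIp : adjoint Ip x = (2 : ℝ) • (zhat - zstar) := by
    rw [← hz, smul_smul]; norm_num
  have hinner : ⟪d, x⟫ + ⟪βhat - βstar, adjoint Im x⟫ = ρ * ⟪z - zhat, adjoint Ip x⟫ := by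
    simpa only [inner_add_left, real_inner_smul_left, adjoint_inner_right]
      using congrArg (⟪·, x⟫) hopt
  have hzpolar := two_mul_real_inner_sub_sub z zhat zstar
  have hβpolar := two_mul_real_inner_sub_sub β βhat βstar
  rw [hIm, hIp, real_inner_smul_right, real_inner_smul_right,
    ← neg_sub β βhat, inner_neg_right, real_inner_comm (β - βhat)] at hinner
  linear_combination hinner + ρ * hzpolar + (1 / ρ) * hβpolar

end InnerProductSpace

theorem add_sq_le_mul_sq_add_mul_sq {κ : ℝ} (hκ : 1 < κ) (a b : ℝ) :
    (a + b) ^ 2 ≤ κ * a ^ 2 + κ / (κ - 1) * b ^ 2 := by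
  have hκ1 : 0 < κ - 1 := sub_pos.2 hκ
  have key :
      κ * a ^ 2 + κ / (κ - 1) * b ^ 2 - (a + b) ^ 2 = ((κ - 1) * a - b) ^ 2 / (κ - 1) := by
    field_simp
    ring
  linarith [div_nonneg (sq_nonneg ((κ - 1) * a - b)) hκ1.le]

/-- Read `X = ‖x̂ − x*‖`, `Y = ‖z − ẑ‖`, `Zh = ‖ẑ − z*‖`, `Bh = ‖β̂ − β*‖`. -/
theorem mul_G_norm_sq_le_energy_decrease {ρ ν L σm σp κ c X Y Zh Bh : ℝ}
    (hρ : 0 < ρ) (hσm : 0 < σm) (hσp : 0 < σp) (hκ : 1 < κ) (hc0 : 0 ≤ c)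
    (hc1 : c ≤ (κ - 1) * σm ^ 2 / (κ * σp ^ 2))
    (hc2 : c ≤ ν / (κ * L ^ 2 / (ρ * σm ^ 2) + (ρ / 4) * σp ^ 2))
    (hZh0 : 0 ≤ Zh) (hZh : Zh ≤ σp / 2 * X) (hBh0 : 0 ≤ Bh) (hBh : σm * Bh ≤ L * X + ρ * σp * Y) :
    c * (ρ * Zh ^ 2 + 1 / ρ * Bh ^ 2) ≤ ν * X ^ 2 + ρ * Y ^ 2 := by
  have hκ1 : 0 < κ - 1 := sub_pos.2 hκ
  set D := κ * L ^ 2 / (ρ * σm ^ 2) + (ρ / 4) * σp ^ 2 with hD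
  set b := κ * ρ * σp ^ 2 / ((κ - 1) * σm ^ 2) with hb
  have hZh2 : ρ * Zh ^ 2 ≤ ρ / 4 * σp ^ 2 * X ^ 2 := by
    have := pow_le_pow_left₀ hZh0 hZh 2
    nlinarith
  have hBh2 : 1 / ρ * Bh ^ 2 ≤ κ * L ^ 2 / (ρ * σm ^ 2) * X ^ 2 + b * Y ^ 2 :=
    calc 1 / ρ * Bh ^ 2 = (σm * Bh) ^ 2 / (ρ * σm ^ 2) := by field_simp
      _ ≤ (κ * (L * X) ^ 2 + κ / (κ - 1) * (ρ * σp * Y) ^ 2) / (ρ * σm ^ 2) := by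
        gcongr
        exact (pow_le_pow_left₀ (by positivity) hBh 2).trans (add_sq_le_mul_sq_add_mul_sq hκ _ _)
      _ = κ * L ^ 2 / (ρ * σm ^ 2) * X ^ 2 + b * Y ^ 2 := by
        rw [hb]
        field_simp
  have hcD : c * D ≤ ν := (le_div_iff₀ (by positivity)).1 hc2
  have hcb : c * b ≤ ρ :=
    calc c * b = ρ * (c * (κ * σp ^ 2)) / ((κ - 1) * σm ^ 2) := by ring
      _ ≤ ρ * ((κ - 1) * σm ^ 2) / ((κ - 1) * σm ^ 2) := by
        gcongr ρ * ?_ / _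
        exact (le_div_iff₀ (by positivity)).1 hc1
      _ = ρ := by field_simp
  calc c * (ρ * Zh ^ 2 + 1 / ρ * Bh ^ 2) ≤ c * (D * X ^ 2 + b * Y ^ 2) := by
        gcongr c * ?_
        rw [hD]
        linarith
    _ = c * D * X ^ 2 + c * b * Y ^ 2 := by ring
    _ ≤ ν * X ^ 2 + ρ * Y ^ 2 := by gcongr

theorem stmt_10_general (N m : ℕ) (ρ ν L σm σp κ : ℝ)
    (hρ : 0 < ρ) (hν : 0 < ν) (hσm : 0 < σm) (hσp : 0 < σp) (hκ : 1 < κ)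
    (Iplus Iminus : Matrix (Fin N) (Fin m) ℝ)
    (hIp : ∀ u : EuclideanSpace ℝ (Fin m), ‖Iplus.toEuclideanLin u‖ ≤ σp * ‖u‖)
    (hIpT : ∀ v : EuclideanSpace ℝ (Fin N), ‖Iplus.transpose.toEuclideanLin v‖ ≤ σp * ‖v‖)
    (gradf : EuclideanSpace ℝ (Fin N) → EuclideanSpace ℝ (Fin N))
    (hmono : ∀ u v : EuclideanSpace ℝ (Fin N),
      ν * ‖u - v‖ ^ 2 ≤ ⟪gradf u - gradf v, u - v⟫)
    (hlip : ∀ u v : EuclideanSpace ℝ (Fin N), ‖gradf u - gradf v‖ ≤ L * ‖u - v‖)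
    (xhat xstar : EuclideanSpace ℝ (Fin N))
    (zhat z zstar βhat β βstar : EuclideanSpace ℝ (Fin m))
    (h1 : gradf xhat + Iminus.toEuclideanLin βhat = ρ • Iplus.toEuclideanLin (z - zhat))
    (h2 : (ρ / 2) • Iminus.transpose.toEuclideanLin (xhat - xstar) = βhat - β)
    (h3 : (1 / 2 : ℝ) • Iplus.transpose.toEuclideanLin (xhat - xstar) = zhat - zstar)
    (h4 : gradf xstar + Iminus.toEuclideanLin βstar = 0)
    (h6 : σm * ‖βhat - βstar‖ ≤ ‖Iminus.toEuclideanLin (βhat - βstar)‖)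
    (c : ℝ)
    (hc : c = min ((κ - 1) * σm ^ 2 / (κ * σp ^ 2))
               (ν / (κ * L ^ 2 / (ρ * σm ^ 2) + (ρ / 4) * σp ^ 2))) :
    ρ * ‖zhat - zstar‖ ^ 2 + (1 / ρ) * ‖βhat - βstar‖ ^ 2
      ≤ (1 / (1 + c)) * (ρ * ‖z - zstar‖ ^ 2 + (1 / ρ) * ‖β - βstar‖ ^ 2) := by
  have hdiff : (gradf xhat - gradf xstar) + Iminus.toEuclideanLin (βhat - βstar)
      = ρ • Iplus.toEuclideanLin (z - zhat) := by
    rw [map_sub]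
    linear_combination (norm := module) h1 - h4
  have hZh : ‖zhat - zstar‖ ≤ σp / 2 * ‖xhat - xstar‖ := by
    rw [← h3, norm_smul, Real.norm_of_nonneg (by norm_num)]
    linarith [hIpT (xhat - xstar)]
  have hBh : σm * ‖βhat - βstar‖ ≤ L * ‖xhat - xstar‖ + ρ * σp * ‖z - zhat‖ :=
    calc σm * ‖βhat - βstar‖ ≤ ‖Iminus.toEuclideanLin (βhat - βstar)‖ := h6
      _ = ‖ρ • Iplus.toEuclideanLin (z - zhat) - (gradf xhat - gradf xstar)‖ := by
        rw [← hdiff, add_sub_cancel_left]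
      _ ≤ ρ * (σp * ‖z - zhat‖) + L * ‖xhat - xstar‖ := by
        grw [norm_sub_le, norm_smul, Real.norm_of_nonneg hρ.le, hIp, hlip]
      _ = L * ‖xhat - xstar‖ + ρ * σp * ‖z - zhat‖ := by ring
  rw [Matrix.toEuclideanLin_transpose_eq_adjoint] at h2 h3
  have henergy := admm_energy_identity hρ.ne' _ _ hdiff h2 h3
  have hc0 : 0 ≤ c :=
    hc ▸ le_min (div_nonneg (mul_nonneg (by linarith) (sq_nonneg σm)) (by positivity))
      (by positivity)
  have hrate := mul_G_norm_sq_le_energy_decrease hρ hσm hσp hκ hc0 (hc ▸ min_le_left _ _)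
    (hc ▸ min_le_right _ _) (norm_nonneg _) hZh (norm_nonneg _) hBh
  rw [one_div_mul_eq_div (1 + c), le_div_iff₀ (by linarith)]
  linarith [hmono xhat xstar, mul_nonneg (one_div_nonneg.2 hρ.le) (sq_nonneg ‖β - βhat‖)]

/-- One-step contraction claim of the main theorem:
`‖ŵ − w*‖²_G ≤ ‖w − w*‖²_G / (1 + c)` with
`c = min{(κ−1)σ₋²/(κσ₊²), ν/(κL²/(ρσ₋²) + (ρ/4)σ₊²)}` and
`‖(z, β)‖²_G = ρ‖z‖² + (1/ρ)‖β‖²`. -/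
theorem stmt_10 (N m : ℕ) (ρ ν L σm σp κ : ℝ)
    (hρ : 0 < ρ) (hν : 0 < ν) (hL : 0 < L) (hσm : 0 < σm) (hσp : 0 < σp) (hκ : 1 < κ)
    (Iplus Iminus : Matrix (Fin N) (Fin m) ℝ)
    (hIp : ∀ u : EuclideanSpace ℝ (Fin m), ‖Iplus.toEuclideanLin u‖ ≤ σp * ‖u‖)
    (hIpT : ∀ v : EuclideanSpace ℝ (Fin N), ‖Iplus.transpose.toEuclideanLin v‖ ≤ σp * ‖v‖)
    (f : EuclideanSpace ℝ (Fin N) → ℝ)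
    (gradf : EuclideanSpace ℝ (Fin N) → EuclideanSpace ℝ (Fin N))
    (hgrad : ∀ u, HasGradientAt f (gradf u) u)
    (hmono : ∀ u v : EuclideanSpace ℝ (Fin N),
      ν * ‖u - v‖ ^ 2 ≤ ⟪gradf u - gradf v, u - v⟫)
    (hlip : ∀ u v : EuclideanSpace ℝ (Fin N), ‖gradf u - gradf v‖ ≤ L * ‖u - v‖)
    (xhat xstar : EuclideanSpace ℝ (Fin N))
    (zhat z zstar βhat β βstar : EuclideanSpace ℝ (Fin m))
    (h1 : gradf xhat + Iminus.toEuclideanLin βhat = ρ • Iplus.toEuclideanLin (z - zhat))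
    (h2 : (ρ / 2) • Iminus.transpose.toEuclideanLin (xhat - xstar) = βhat - β)
    (h3 : (1 / 2 : ℝ) • Iplus.transpose.toEuclideanLin (xhat - xstar) = zhat - zstar)
    (h4 : gradf xstar + Iminus.toEuclideanLin βstar = 0)
    (h5 : Iminus.transpose.toEuclideanLin xstar = 0)
    (h6 : σm * ‖βhat - βstar‖ ≤ ‖Iminus.toEuclideanLin (βhat - βstar)‖)
    (c : ℝ)
    (hc : c = min ((κ - 1) * σm ^ 2 / (κ * σp ^ 2))
               (ν / (κ * L ^ 2 / (ρ * σm ^ 2) + (ρ / 4) * σp ^ 2))) :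
    ρ * ‖zhat - zstar‖ ^ 2 + (1 / ρ) * ‖βhat - βstar‖ ^ 2
      ≤ (1 / (1 + c)) * (ρ * ‖z - zstar‖ ^ 2 + (1 / ρ) * ‖β - βstar‖ ^ 2) :=
  stmt_10_general N m ρ ν L σm σp κ hρ hν hσm hσp hκ Iplus Iminus hIp hIpT gradf hmono hlip xhat
    xstar zhat z zstar βhat β βstar h1 h2 h3 h4 h6 c hc
end
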